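/- arXiv:2206.15209 — 10 statements merged into one kernel-verified Lean document; each statement's English description precedes it below -/
import Mathlib

section
/- Let M be an invertible m×m real matrix, let σ > 0, let ξ₁,…,ξ_k be nonnegative weights with Σᵢ ξᵢ = 1, and let g₁,…,g_k ∈ ℝˢ. Set fᵢ = (1, σ²gᵢ) ∈ ℝ^{1+s} and f̃ᵢ = (1, gᵢ) ∈ ℝ^{1+s}, and define V = Σᵢ ξᵢ fᵢ fᵢᵀ and Ṽ = Σᵢ ξᵢ f̃ᵢ f̃ᵢᵀ (both (1+s)×(1+s) matrices). Let I be the block-diagonal matrix with diagonal blocks M and (1/(2σ⁴))·V, and let I₁₁ be the block-diagonal matrix with diagonal blocks M and the 1×1 block 1/(2σ⁴). Then det(I)/det(I₁₁) = (1/2)ˢ · det(Ṽ). (Consequently, the D_s-optimality criterion Φ_{D_s}(ξ) = |I|/|I₁₁| for the variance parameters γ is, up to the constant (1/2)ˢ, the D-optimality criterion of the auxiliary linear regression with regressor vector (1, ∇log h(x; γ̃)).) -/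
open Matrix
open scoped BigOperators

/-!
Writing `d = (1, σ², …, σ²)`, each regressor is `fᵢ = d ⊙ f̃ᵢ`, so `V = D Ṽ D` with `D = diag d`
and `det V = σ^{4s} det Ṽ`. The block `M` cancels from the ratio of block-diagonal
determinants, and the scalar `1/(2σ⁴)` contributes `(2σ⁴)^{-s}`, which absorbs `σ^{4s}`.
-/

theorem Fin.cons_mul_cons {R : Type*} [Mul R] {n : ℕ} (a b : R) (u v : Fin n → R) :
    (Fin.cons a u : Fin (n + 1) → R) * Fin.cons b v = Fin.cons (a * b) (u * v) := by
  ext j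
  refine Fin.cases ?_ (fun _ => ?_) j <;> simp

namespace Matrix

variable {ι κ R : Type*} [Fintype ι] [DecidableEq ι] [CommSemiring R]

theorem vecMulVec_mul_mul_self (d u : ι → R) :
    vecMulVec (d * u) (d * u) = diagonal d * vecMulVec u u * diagonal d := by
  ext j l
  simp only [vecMulVec_apply, mul_diagonal, diagonal_mul, Pi.mul_apply]
  ring

theorem sum_smul_vecMulVec_mul_self [Fintype κ] (w : κ → R) (d : ι → R) (u : κ → ι → R) :
    ∑ i, w i • vecMulVec (d * u i) (d * u i) =
      diagonal d * (∑ i, w i • vecMulVec (u i) (u i)) * diagonal d := by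
  simp only [vecMulVec_mul_mul_self, Matrix.mul_sum, Matrix.sum_mul, Matrix.mul_smul,
    Matrix.smul_mul]

theorem det_diagonal_mul_mul_diagonal {R : Type*} [CommRing R] (d : ι → R)
    (A : Matrix ι ι R) : (diagonal d * A * diagonal d).det = (∏ i, d i) ^ 2 * A.det := by
  rw [det_mul, det_mul, det_diagonal]
  ring

theorem det_fromBlocks_zero_div_det_fromBlocks_zero {m n p K : Type*} [Fintype m]
    [DecidableEq m] [Fintype n] [DecidableEq n] [Fintype p] [DecidableEq p] [Field K]
    {A : Matrix m m K} (hA : A.det ≠ 0) (B : Matrix n n K) (C : Matrix p p K) :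
    (fromBlocks A 0 0 B).det / (fromBlocks A 0 0 C).det = B.det / C.det := by
  rw [det_fromBlocks_zero₁₂, det_fromBlocks_zero₁₂, mul_div_mul_left _ _ hA]

end Matrix

theorem stmt_0_general (m s k : ℕ)
    (M : Matrix (Fin m) (Fin m) ℝ) (hM : IsUnit M.det)
    (σ : ℝ) (hσ : 0 < σ)
    (ξ : Fin k → ℝ)
    (g : Fin k → Fin s → ℝ) :
    let f : Fin k → Fin (s + 1) → ℝ := fun i => Fin.cons 1 (fun j => σ ^ 2 * g i j)
    let ftil : Fin k → Fin (s + 1) → ℝ := fun i => Fin.cons 1 (g i)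
    let V : Matrix (Fin (s + 1)) (Fin (s + 1)) ℝ := ∑ i, ξ i • vecMulVec (f i) (f i)
    let Vtil : Matrix (Fin (s + 1)) (Fin (s + 1)) ℝ := ∑ i, ξ i • vecMulVec (ftil i) (ftil i)
    let I : Matrix (Fin m ⊕ Fin (s + 1)) (Fin m ⊕ Fin (s + 1)) ℝ :=
      fromBlocks M 0 0 ((1 / (2 * σ ^ 4)) • V)
    let I11 : Matrix (Fin m ⊕ Fin 1) (Fin m ⊕ Fin 1) ℝ :=
      fromBlocks M 0 0 ((1 / (2 * σ ^ 4)) • (1 : Matrix (Fin 1) (Fin 1) ℝ))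
    I.det / I11.det = (1 / 2) ^ s * Vtil.det := by
  intro f ftil V Vtil I I11
  set d : Fin (s + 1) → ℝ := Fin.cons 1 (fun _ => σ ^ 2)
  have hf : ∀ i, f i = d * ftil i := fun i => by
    simp only [f, ftil, d, Fin.cons_mul_cons, one_mul]
    rfl
  have hV : V.det = (σ ^ 2) ^ s * (σ ^ 2) ^ s * Vtil.det := by
    simp only [V, hf, sum_smul_vecMulVec_mul_self, det_diagonal_mul_mul_diagonal, d,
      Fin.prod_cons, Finset.prod_const, Finset.card_univ, Fintype.card_fin]
    ring
  have hscale : 1 / (2 * σ ^ 4) * σ ^ 2 * σ ^ 2 = 1 / 2 := by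
    field_simp
  rw [det_fromBlocks_zero_div_det_fromBlocks_zero hM.ne_zero, det_smul, det_smul, hV, det_one,
    Fintype.card_fin, Fintype.card_fin, pow_succ', pow_one, mul_one,
    mul_assoc, mul_div_cancel_left₀ _ (by positivity), ← hscale, mul_pow, mul_pow]
  ring

/-- The D_s-optimality criterion |I|/|I₁₁| for the variance parameters equals,
up to the constant (1/2)^s, the D-optimality criterion of the auxiliary linear
regression with regressor vector (1, ∇log h). -/
theorem stmt_0 (m s k : ℕ)
    (M : Matrix (Fin m) (Fin m) ℝ) (hM : IsUnit M.det)
    (σ : ℝ) (hσ : 0 < σ)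
    (ξ : Fin k → ℝ) (hξ : ∀ i, 0 ≤ ξ i) (hξ1 : ∑ i, ξ i = 1)
    (g : Fin k → Fin s → ℝ) :
    let f : Fin k → Fin (s + 1) → ℝ := fun i => Fin.cons 1 (fun j => σ ^ 2 * g i j)
    let ftil : Fin k → Fin (s + 1) → ℝ := fun i => Fin.cons 1 (g i)
    let V : Matrix (Fin (s + 1)) (Fin (s + 1)) ℝ := ∑ i, ξ i • vecMulVec (f i) (f i)
    let Vtil : Matrix (Fin (s + 1)) (Fin (s + 1)) ℝ := ∑ i, ξ i • vecMulVec (ftil i) (ftil i)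
    let I : Matrix (Fin m ⊕ Fin (s + 1)) (Fin m ⊕ Fin (s + 1)) ℝ :=
      fromBlocks M 0 0 ((1 / (2 * σ ^ 4)) • V)
    let I11 : Matrix (Fin m ⊕ Fin 1) (Fin m ⊕ Fin 1) ℝ :=
      fromBlocks M 0 0 ((1 / (2 * σ ^ 4)) • (1 : Matrix (Fin 1) (Fin 1) ℝ))
    I.det / I11.det = (1 / 2) ^ s * Vtil.det :=
  stmt_0_general m s k M hM σ hσ ξ g
end

section
/- Let X be a set and g : X → ℝ a function that attains its infimum m = inf_{x∈X} g(x) at a point x_l ∈ X and its supremum M = sup_{x∈X} g(x) at a point x_u ∈ X. For a design ξ with points x₁,…,x_k ∈ X and weights ξ₁,…,ξ_k ≥ 0 summing to 1, write Var_ξ(g) = Σᵢ ξᵢ g(xᵢ)² − (Σᵢ ξᵢ g(xᵢ))². Then: (i) the determinant of the 2×2 matrix Ṽ(ξ) = Σᵢ ξᵢ (1, g(xᵢ))(1, g(xᵢ))ᵀ equals Var_ξ(g); (ii) for every design ξ on X, Var_ξ(g) ≤ ((M−m)/2)², and the two-point design placing weight 1/2 at x_l and weight 1/2 at x_u attains this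 bound. Hence the equally weighted two-point design at x_l and x_u is D₁-optimal. -/
open scoped BigOperators

/-- (i) det of the 2×2 auxiliary information matrix equals the design variance of g;
(ii) every design's variance of g is at most ((M-m)/2)², and the equally weighted
two-point design at the minimizer and maximizer of g attains this bound. -/
theorem stmt_1 (X : Type*) (g : X → ℝ) (xl xu : X)
    (hl : ∀ x, g xl ≤ g x) (hu : ∀ x, g x ≤ g xu) :
    (∀ (k : ℕ) (x : Fin k → X) (w : Fin k → ℝ), (∀ i, 0 ≤ w i) → ∑ i, w i = 1 →
      (∑ i, w i • Matrix.vecMulVec ![1, g (x i)] ![1, g (x i)]).det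
        = (∑ i, w i * g (x i) ^ 2) - (∑ i, w i * g (x i)) ^ 2) ∧
    (∀ (k : ℕ) (x : Fin k → X) (w : Fin k → ℝ), (∀ i, 0 ≤ w i) → ∑ i, w i = 1 →
      (∑ i, w i * g (x i) ^ 2) - (∑ i, w i * g (x i)) ^ 2 ≤ ((g xu - g xl) / 2) ^ 2) ∧
    ((1 / 2 * g xl ^ 2 + 1 / 2 * g xu ^ 2) - (1 / 2 * g xl + 1 / 2 * g xu) ^ 2
      = ((g xu - g xl) / 2) ^ 2) := by
  refine ⟨?_, ?_, by ring⟩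
  · intro k x w hw hsum
    rw [Matrix.det_fin_two]
    simp only [Matrix.sum_apply, Matrix.smul_apply, Matrix.vecMulVec_apply,
      smul_eq_mul, Matrix.cons_val_zero, Matrix.cons_val_one, Matrix.head_cons,
      mul_one, one_mul]
    rw [hsum]
    ring_nf
  · intro k x w hw hsum
    set c : ℝ := (g xl + g xu) / 2 with hc
    set d : ℝ := (g xu - g xl) / 2 with hd
    have key : ∀ i ∈ Finset.univ, w i * (g (x i) - c) ^ 2 ≤ w i * d ^ 2 := by
      intro i _
      refine mul_le_mul_of_nonneg_left ?_ (hw i)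
      rw [hc, hd]
      nlinarith [mul_nonneg (sub_nonneg.2 (hl (x i))) (sub_nonneg.2 (hu (x i)))]
    have h1 : ∑ i, w i * (g (x i) - c) ^ 2 ≤ d ^ 2 := by
      calc ∑ i, w i * (g (x i) - c) ^ 2 ≤ ∑ i, w i * d ^ 2 := Finset.sum_le_sum key
        _ = d ^ 2 := by rw [← Finset.sum_mul, hsum, one_mul]
    have expand : ∑ i, w i * (g (x i) - c) ^ 2
        = (∑ i, w i * g (x i) ^ 2) - 2 * c * (∑ i, w i * g (x i)) + c ^ 2 := by
      have h2 : ∀ i ∈ Finset.univ, w i * (g (x i) - c) ^ 2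
          = w i * g (x i) ^ 2 - 2 * c * (w i * g (x i)) + c ^ 2 * w i := fun i _ => by ring
      rw [Finset.sum_congr rfl h2, Finset.sum_add_distrib, Finset.sum_sub_distrib,
        ← Finset.mul_sum, ← Finset.mul_sum, hsum, mul_one]
    nlinarith [sq_nonneg ((∑ i, w i * g (x i)) - c)]
end

section
/- Let x₁,…,x_k be design points with weights ξ₁,…,ξ_k ≥ 0 summing to 1, let h₁,…,h_k > 0, let σ₁² > 0, let β₁ ∈ ℝᵐ, and let μ : ℝᵐ × {1,…,k} → ℝ be any function of the parameter β and the design point. Then the infimum over β ∈ ℝᵐ and σ² > 0 of Σᵢ ξᵢ [ (σ₁²hᵢ + (μ(β₁,i) − μ(β,i))²)/σ² − log(σ₁²hᵢ/σ²) ] equals 1 + log(Σᵢ ξᵢ hᵢ) − Σᵢ ξᵢ log hᵢ, i.e. the KL-criterion equals 1 + log A_h − log G_h where A_h = Σᵢ ξᵢ hᵢ is the arithmetic mean and G_h = Πᵢ hᵢ^{ξᵢ} is the weighted geometric mean of the values hᵢ. The infimum is attained at β = β₁ and σ² = σ₁²·Σᵢ ξᵢ hᵢ. -/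
open scoped BigOperators

/-- The KL-criterion: the infimum over β and σ² > 0 of the Kullback-Leibler
objective equals 1 + log A_h - log G_h, attained at β = β₁ and
σ² = σ₁² · Σᵢ ξᵢ hᵢ. -/
theorem stmt_3 (k m : ℕ)
    (w : Fin k → ℝ) (hw : ∀ i, 0 ≤ w i) (hw1 : ∑ i, w i = 1)
    (h : Fin k → ℝ) (hh : ∀ i, 0 < h i)
    (σ1sq : ℝ) (hσ : 0 < σ1sq)
    (β₁ : Fin m → ℝ) (μ : (Fin m → ℝ) → Fin k → ℝ) :
    let KL : ℝ := 1 + Real.log (∑ i, w i * h i) - ∑ i, w i * Real.log (h i)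
    let F : (Fin m → ℝ) → ℝ → ℝ := fun β t =>
      ∑ i, w i * ((σ1sq * h i + (μ β₁ i - μ β i) ^ 2) / t - Real.log (σ1sq * h i / t))
    F β₁ (σ1sq * ∑ i, w i * h i) = KL ∧ ∀ (β : Fin m → ℝ) (t : ℝ), 0 < t → KL ≤ F β t := by
  intro KL F
  set S := ∑ i, w i * h i with hS
  have hSpos : 0 < S := by
    have hex : ∃ i, w i ≠ 0 := by
      by_contra h0
      push_neg at h0
      simp [h0] at hw1
    obtain ⟨j, hj⟩ := hex
    apply Finset.sum_pos' (fun i _ => mul_nonneg (hw i) (hh i).le)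
    exact ⟨j, Finset.mem_univ j,
      mul_pos (lt_of_le_of_ne (hw j) (Ne.symm hj)) (hh j)⟩
  -- expansion of the log terms
  have hlog : ∀ (t : ℝ), 0 < t → ∀ i,
      Real.log (σ1sq * h i / t) = Real.log σ1sq + Real.log (h i) - Real.log t := by
    intro t ht i
    rw [Real.log_div (ne_of_gt (mul_pos hσ (hh i))) (ne_of_gt ht), Real.log_mul (ne_of_gt hσ) (ne_of_gt (hh i))]
  -- the "G" sum
  have expand : ∀ (t : ℝ), 0 < t →
      ∑ i, w i * (σ1sq * h i / t - Real.log (σ1sq * h i / t))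
        = (σ1sq / t) * S - Real.log σ1sq - (∑ i, w i * Real.log (h i)) + Real.log t := by
    intro t ht
    have : ∀ i ∈ Finset.univ, w i * (σ1sq * h i / t - Real.log (σ1sq * h i / t))
        = (σ1sq / t) * (w i * h i) - Real.log σ1sq * w i - w i * Real.log (h i)
          + Real.log t * w i := by
      intro i _
      rw [hlog t ht i]
      ring
    rw [Finset.sum_congr rfl this]
    simp only [Finset.sum_add_distrib, Finset.sum_sub_distrib, ← Finset.mul_sum, hw1, ← hS]
    ring
  constructor
  · have ht : 0 < σ1sq * S := mul_pos hσ hSpos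
    have h1 : F β₁ (σ1sq * S)
        = ∑ i, w i * (σ1sq * h i / (σ1sq * S) - Real.log (σ1sq * h i / (σ1sq * S))) := by
      simp [F]
    rw [h1, expand _ ht]
    rw [Real.log_mul (ne_of_gt hσ) (ne_of_gt hSpos)]
    have : σ1sq / (σ1sq * S) * S = 1 := by
      field_simp
    rw [this]
    simp only [KL]
    ring
  · intro β t ht
    have step1 : ∑ i, w i * (σ1sq * h i / t - Real.log (σ1sq * h i / t)) ≤ F β t := by
      apply Finset.sum_le_sum
      intro i _
      gcongr
      · exact hw i
      · nlinarith [sq_nonneg (μ β₁ i - μ β i)]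
    refine le_trans ?_ step1
    rw [expand t ht]
    have hx : 0 < σ1sq * S / t := by positivity
    have hlb := Real.log_le_sub_one_of_pos hx
    rw [Real.log_div (by positivity) (ne_of_gt ht),
        Real.log_mul (ne_of_gt hσ) (ne_of_gt hSpos)] at hlb
    have heq : σ1sq / t * S = σ1sq * S / t := by ring
    rw [heq]
    simp only [KL, ← hS]
    linarith
end

section
/- Let X be a set and h : X → ℝ a positive function with h̲ = inf_{x∈X} h(x) > 0 attained at a point x̲ ∈ X and h̄ = sup_{x∈X} h(x) < ∞ attained at a point x̄ ∈ X, and assume h̲ < h̄. Set ω = h̄/(h̄−h̲) − 1/(log h̄ − log h̲). Then ω ∈ (0,1), and for every design ξ with points x₁,…,x_k ∈ X and weights ξᵢ ≥ 0 summing to 1, I₁₂(ξ) = 1 + log(Σᵢ ξᵢ h(xᵢ)) − Σᵢ ξᵢ log h(xᵢ) ≤ 1 + log(ω·h̲ + (1−ω)·h̄) − (ω·log h̲ + (1−ω)·log h̄), i.e. the two-point design placing weight ω at x̲ and weight 1−ω at x̄ maximizes the KL-criterion over all finitely supported designs on X. -/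
open scoped BigOperators

/-!
Write `a = h̲`, `b = h̄` and let `M = (b - a) / (log b - log a)` be their logarithmic mean, the
reciprocal of the slope of the secant of `log` over `[a, b]`; then `ω = (b - M) / (b - a)`, so the
two-point design has mean `M`, and `a < M < b` gives `ω ∈ (0, 1)`. For any design with mean `m`,
concavity of `log` bounds `∑ ξᵢ log h(xᵢ)` from below by the secant evaluated at `m`, while the
tangent of `log` at `M`, whose slope is that of the secant, bounds `log m` from above. Together they
bound the criterion by `1 + log M - secant(M)`, which is the value of the two-point design.
-/

open Real Set Finset

theorem ConcaveOn.secant_le {f : ℝ → ℝ} {a b t : ℝ} (hf : ConcaveOn ℝ (Icc a b) f)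
    (ht : t ∈ Icc a b) : f a + slope f a b * (t - a) ≤ f t := by
  rcases (ht.1.trans ht.2).eq_or_lt with rfl | hab
  · obtain rfl : t = a := le_antisymm ht.2 ht.1
    simp
  have hba : 0 < b - a := sub_pos.mpr hab
  have hcombo := hf.2 (left_mem_Icc.mpr hab.le) (right_mem_Icc.mpr hab.le)
    (div_nonneg (sub_nonneg.mpr ht.2) hba.le) (div_nonneg (sub_nonneg.mpr ht.1) hba.le)
    (by rw [← add_div, div_eq_one_iff_eq hba.ne']; ring)
  have ht_eq : ((b - t) / (b - a)) • a + ((t - a) / (b - a)) • b = t := by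
    simp only [smul_eq_mul]; field_simp; ring
  rw [ht_eq] at hcombo
  calc f a + slope f a b * (t - a)
      = ((b - t) / (b - a)) • f a + ((t - a) / (b - a)) • f b := by
        simp only [smul_eq_mul, slope_def_field]; field_simp; ring
    _ ≤ f t := hcombo

theorem ConcaveOn.secant_le_sum {ι : Type*} (s : Finset ι) {f : ℝ → ℝ} {a b : ℝ}
    (hf : ConcaveOn ℝ (Icc a b) f) {w y : ι → ℝ} (hw : ∀ i ∈ s, 0 ≤ w i)
    (hw₁ : ∑ i ∈ s, w i = 1) (hy : ∀ i ∈ s, y i ∈ Icc a b) :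
    f a + slope f a b * (∑ i ∈ s, w i * y i - a) ≤ ∑ i ∈ s, w i * f (y i) :=
  calc f a + slope f a b * (∑ i ∈ s, w i * y i - a)
      = ∑ i ∈ s, w i * (f a + slope f a b * (y i - a)) := by
        simp only [mul_add, mul_sub, sum_add_distrib, sum_sub_distrib, ← sum_mul, hw₁,
          mul_left_comm _ (slope f a b), ← mul_sum]
        ring
    _ ≤ ∑ i ∈ s, w i * f (y i) :=
        sum_le_sum fun i hi => mul_le_mul_of_nonneg_left (hf.secant_le (hy i hi)) (hw i hi)

theorem secant_combo_eq {f : ℝ → ℝ} {a b : ℝ} (hab : a ≠ b) (ω : ℝ) :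
    f a + slope f a b * (ω * a + (1 - ω) * b - a) = ω * f a + (1 - ω) * f b := by
  rw [slope_def_field]
  field_simp [sub_ne_zero.mpr hab.symm]
  ring

noncomputable def logMean (a b : ℝ) : ℝ := (b - a) / (log b - log a)

theorem slope_log_eq_inv_logMean (a b : ℝ) : slope log a b = (logMean a b)⁻¹ := by
  rw [slope_def_field, logMean, inv_div]

theorem logMean_mem_Ioo {a b : ℝ} (ha : 0 < a) (hab : a < b) : logMean a b ∈ Ioo a b := by
  have hb : 0 < b := ha.trans hab
  have hL : 0 < log b - log a := sub_pos.mpr (log_lt_log ha hab)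
  have hlog_ba : log (b / a) < b / a - 1 :=
    log_lt_sub_one_of_pos (div_pos hb ha) (ne_of_gt ((one_lt_div ha).mpr hab))
  have hlog_ab : log (a / b) < a / b - 1 :=
    log_lt_sub_one_of_pos (div_pos ha hb) (ne_of_lt ((div_lt_one hb).mpr hab))
  rw [log_div hb.ne' ha.ne'] at hlog_ba
  rw [log_div ha.ne' hb.ne'] at hlog_ab
  rw [logMean, Set.mem_Ioo, lt_div_iff₀ hL, div_lt_iff₀ hL]
  constructor
  · have := mul_lt_mul_of_pos_left hlog_ba ha
    field_simp at this
    linarith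
  · have := mul_lt_mul_of_pos_left hlog_ab hb
    field_simp at this
    linarith

theorem log_le_log_add_inv_mul_sub {m M : ℝ} (hM : 0 < M) (hm : 0 < m) :
    log m ≤ log M + M⁻¹ * (m - M) := by
  have := log_le_sub_one_of_pos (div_pos hm hM)
  rw [log_div hm.ne' hM.ne'] at this
  have e : m / M - 1 = M⁻¹ * (m - M) := by field_simp
  linarith

/-- The two-point design placing weight ω = h̄/(h̄-h̲) - 1/(log h̄ - log h̲) at a
minimizer of h and 1-ω at a maximizer maximizes the KL-criterion over all
finitely supported designs, and ω ∈ (0,1). -/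
theorem stmt_7 (X : Type*) (h : X → ℝ) (hpos : ∀ x, 0 < h x)
    (xlo xhi : X) (hlo : ∀ x, h xlo ≤ h x) (hhi : ∀ x, h x ≤ h xhi)
    (hlt : h xlo < h xhi) :
    let ω : ℝ := h xhi / (h xhi - h xlo) - 1 / (Real.log (h xhi) - Real.log (h xlo))
    (0 < ω ∧ ω < 1) ∧
    ∀ (k : ℕ) (x : Fin k → X) (w : Fin k → ℝ), (∀ i, 0 ≤ w i) → ∑ i, w i = 1 →
      1 + Real.log (∑ i, w i * h (x i)) - ∑ i, w i * Real.log (h (x i))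
        ≤ 1 + Real.log (ω * h xlo + (1 - ω) * h xhi)
          - (ω * Real.log (h xlo) + (1 - ω) * Real.log (h xhi)) := by
  intro ω
  set M := logMean (h xlo) (h xhi)
  have hM : M ∈ Ioo (h xlo) (h xhi) := logMean_mem_Ioo (hpos xlo) hlt
  have hba : 0 < h xhi - h xlo := sub_pos.mpr hlt
  have hL : log (h xhi) - log (h xlo) ≠ 0 := (sub_pos.mpr (log_lt_log (hpos xlo) hlt)).ne'
  have hω : ω = (h xhi - M) / (h xhi - h xlo) := by
    simp only [ω, M, logMean]; field_simp
  have hmean : ω * h xlo + (1 - ω) * h xhi = M := by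
    rw [hω]; field_simp; ring
  refine ⟨⟨?_, ?_⟩, fun k x w hw hw₁ => ?_⟩
  · rw [hω]; exact div_pos (by linarith [hM.2]) hba
  · rw [hω, div_lt_one hba]; linarith [hM.1]
  have hlog : ConcaveOn ℝ (Icc (h xlo) (h xhi)) log :=
    strictConcaveOn_log_Ioi.concaveOn.subset (Icc_subset_Ioi_iff hlt.le |>.mpr (hpos xlo))
      (convex_Icc _ _)
  have hsecant := hlog.secant_le_sum univ (y := fun i => h (x i)) (fun i _ => hw i) hw₁
    fun i _ => ⟨hlo _, hhi _⟩
  have hm : 0 < ∑ i, w i * h (x i) :=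
    (convex_Ioi (0 : ℝ)).sum_mem (fun i _ => hw i) hw₁ fun i _ => hpos (x i)
  have htangent := log_le_log_add_inv_mul_sub (hpos xlo |>.trans hM.1) hm
  rw [← secant_combo_eq hlt.ne, hmean]
  rw [slope_log_eq_inv_logMean] at hsecant ⊢
  linarith
end

section
/- Let 0 < h̲ < h̄ < ∞ and set ω = h̄/(h̄−h̲) − 1/(log h̄ − log h̲) and H = h̲·(log h̄ − log h̲)/(h̄ − h̲). Then ω ∈ (1/2, 1), H ∈ (0,1), and log(ω·h̲ + (1−ω)·h̄) − ω·log h̲ − (1−ω)·log h̄ = H − 1 − log H; consequently the KL-criterion of the two-point design with weight ω at a point where h = h̲ and weight 1−ω at a point where h = h̄ equals H − log H. -/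
lemma two_div_lt_log (x : ℝ) (hx : 1 < x) : 2*(x-1)/(x+1) < Real.log x := by
  have hmono : StrictMonoOn (fun x : ℝ => Real.log x + 4/(x+1)) (Set.Ici 1) := by
    apply strictMonoOn_of_deriv_pos (convex_Ici 1)
    · apply ContinuousOn.add
      · exact Real.continuousOn_log.mono (by intro y hy; simp only [Set.mem_Ici] at hy; simp; linarith)
      · exact ContinuousOn.div continuousOn_const
          ((continuous_id.add continuous_const).continuousOn)
          (by intro y hy; simp only [Set.mem_Ici] at hy; intro h; linarith)
    · intro y hy
      rw [interior_Ici, Set.mem_Ioi] at hy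
      have hy0 : y ≠ 0 := by linarith
      have hy1 : y + 1 ≠ 0 := by intro h; linarith
      have h2 : HasDerivAt (fun x : ℝ => x + 1) 1 y := by
        simpa using (hasDerivAt_id y).add_const 1
      have h3 : HasDerivAt (fun x : ℝ => 4/(x+1)) ((0*(y+1) - 4*1)/(y+1)^2) y :=
        (hasDerivAt_const y 4).div h2 hy1
      have h4 : HasDerivAt (fun x : ℝ => Real.log x + 4/(x+1))
          (y⁻¹ + (0*(y+1) - 4*1)/(y+1)^2) y := (Real.hasDerivAt_log hy0).add h3
      rw [h4.deriv]
      have : y⁻¹ + (0*(y+1) - 4*1)/(y+1)^2 = (y-1)^2 / (y * (y+1)^2) := by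
        field_simp; ring
      rw [this]
      exact div_pos (by nlinarith) (by nlinarith)
  have h := hmono (Set.self_mem_Ici) (Set.mem_Ici.mpr (le_of_lt hx)) hx
  simp only [Real.log_one] at h
  have hx1 : (0:ℝ) < x + 1 := by linarith
  rw [div_lt_iff₀ hx1]
  nlinarith [h, div_mul_cancel₀ (4:ℝ) (ne_of_gt hx1)]

/-- For 0 < h̲ < h̄, the KL-optimal weight ω lies in (1/2,1), H ∈ (0,1), and the
KL-criterion of the optimal two-point design equals H - log H, since
log(ω h̲+(1-ω)h̄) - ω log h̲ - (1-ω) log h̄ = H - 1 - log H. -/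
theorem stmt_8 (hlo hhi : ℝ) (h0 : 0 < hlo) (hlt : hlo < hhi) :
    let ω : ℝ := hhi / (hhi - hlo) - 1 / (Real.log hhi - Real.log hlo)
    let H : ℝ := hlo * (Real.log hhi - Real.log hlo) / (hhi - hlo)
    (1 / 2 < ω ∧ ω < 1) ∧ (0 < H ∧ H < 1) ∧
    (Real.log (ω * hlo + (1 - ω) * hhi) - ω * Real.log hlo - (1 - ω) * Real.log hhi
      = H - 1 - Real.log H) ∧
    (1 + Real.log (ω * hlo + (1 - ω) * hhi)
        - (ω * Real.log hlo + (1 - ω) * Real.log hhi) = H - Real.log H) := by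
  have hhi0 : 0 < hhi := lt_trans h0 hlt
  set L := Real.log hhi - Real.log hlo with hLdef
  have hL : 0 < L := sub_pos.mpr (Real.log_lt_log h0 hlt)
  have hD : 0 < hhi - hlo := sub_pos.mpr hlt
  intro ω H
  have hωdef : ω = hhi / (hhi - hlo) - 1 / L := rfl
  have hHdef : H = hlo * L / (hhi - hlo) := rfl
  have hx : 1 < hhi / hlo := (one_lt_div h0).mpr hlt
  have hlogdiv : Real.log (hhi / hlo) = L := by
    rw [hLdef, Real.log_div (ne_of_gt hhi0) (ne_of_gt h0)]
  have hlog1 : L < hhi / hlo - 1 := by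
    have := Real.log_lt_sub_one_of_pos (by positivity) (ne_of_gt hx)
    rwa [hlogdiv] at this
  have e1 : hlo * (hhi / hlo) = hhi := by field_simp
  have key1 : hlo * L < hhi - hlo := by nlinarith
  have hlog2 : 2 * (hhi / hlo - 1) / (hhi / hlo + 1) < L := by
    have := two_div_lt_log _ hx
    rwa [hlogdiv] at this
  have key2 : 2 * (hhi - hlo) < (hhi + hlo) * L := by
    have h1 : 2 * (hhi / hlo - 1) / (hhi / hlo + 1) = 2 * (hhi - hlo) / (hhi + hlo) := by
      rw [div_eq_div_iff (by positivity) (by positivity)]; field_simp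
    rw [h1, div_lt_iff₀ (by positivity)] at hlog2
    linarith
  have hω_gt : 1 / 2 < ω := by
    have hsub : ω - 1 / 2 = ((hhi + hlo) * L - 2 * (hhi - hlo)) / (2 * (hhi - hlo) * L) := by
      rw [hωdef]; field_simp; ring
    have : 0 < ω - 1 / 2 := by
      rw [hsub]; exact div_pos (by linarith) (by positivity)
    linarith
  have hω_lt : ω < 1 := by
    have hsub : (1 : ℝ) - ω = ((hhi - hlo) - hlo * L) / ((hhi - hlo) * L) := by
      rw [hωdef]; field_simp; ring
    have : 0 < 1 - ω := by
      rw [hsub]; exact div_pos (by linarith) (by positivity)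
    linarith
  have hH0 : 0 < H := by rw [hHdef]; positivity
  have hH1 : H < 1 := by rw [hHdef, div_lt_one hD]; linarith
  have hsum : ω * hlo + (1 - ω) * hhi = (hhi - hlo) / L := by
    rw [hωdef]; field_simp; ring
  have hlogsum : Real.log (ω * hlo + (1 - ω) * hhi)
      = Real.log (hhi - hlo) - Real.log L := by
    rw [hsum, Real.log_div (ne_of_gt hD) (ne_of_gt hL)]
  have hlogH : Real.log H = Real.log hlo + Real.log L - Real.log (hhi - hlo) := by
    rw [hHdef, Real.log_div (by positivity) (ne_of_gt hD),
      Real.log_mul (ne_of_gt h0) (ne_of_gt hL)]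
  have main : Real.log (ω * hlo + (1 - ω) * hhi) - ω * Real.log hlo - (1 - ω) * Real.log hhi
      = H - 1 - Real.log H := by
    rw [hlogsum, hlogH, hωdef, hHdef, hLdef]
    have hL' : Real.log hhi - Real.log hlo ≠ 0 := by rw [← hLdef]; exact ne_of_gt hL
    field_simp
    ring
  exact ⟨⟨hω_gt, hω_lt⟩, ⟨hH0, hH1⟩, main, by linarith⟩
end

section
/- Let X ⊆ ℝᵖ, γ₀ ∈ ℝˢ, r > 0, and let h : X × ℝˢ → ℝ be positive with h(x,γ₀) = 1 for all x ∈ X, twice continuously differentiable in γ on the ball B(γ₀,r) for every x ∈ X, and satisfying sup_{x∈X} ‖∇h(x,γ₀)‖ ≤ M₁ < ∞ and sup_{x∈X} sup_{γ∈B(γ₀,r)} ‖h''(x,γ)‖₂ ≤ M₂ < ∞, where ∇h and h'' denote the gradient and Hessian in γ and ‖·‖₂ is the spectral norm. Let L > 0. Then there exist a constant C > 0 and an integer N, depending only on L, M₁, M₂ and r, such that for all n ≥ N, all λ ∈ ℝˢ with ‖λ‖ ≤ L, and all finitely supported designs ξ on X, setting γ₁ = γ₀ + λ/√n, | n·(I₁₂(ξ;γ₁)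 − 1) − ζ(ξ,λ,γ₀) | ≤ C/√n; in particular sup_ξ | n·(I₁₂(ξ;γ₁) − 1) − ζ(ξ,λ,γ₀) | = O(n^{−1/2}) uniformly over ‖λ‖ ≤ L. -/
/-!
Write `γ₁ = γ₀ + t • λ` with `t = n^{-1/2}` and `uᵢ = h(xᵢ; γ₁) - 1`. Taylor's theorem gives
`uᵢ = t λᵀ∇h(xᵢ; γ₀) + O(t²)`, so `|uᵢ| = O(t)`. Expanding `log (1 + u) = u - u²/2 + O(u³)` at
the design mean of `u` and at every design point shows that `I₁₂ - 1` is half the design variance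
of `u` up to `O(t³)`, and that variance is `t²` times the variance of `λᵀ∇h(·; γ₀)` up to `O(t³)`.
Multiplying by `n = t⁻²` leaves an error `O(t)` whose constant involves only `M₁`, `M₂`, `L`.
-/

open Real Filter Topology Metric

theorem Convex.norm_sub_sub_fderiv_le_of_norm_fderiv_fderiv_le
    {E F : Type*} [NormedAddCommGroup E] [NormedSpace ℝ E]
    [NormedAddCommGroup F] [NormedSpace ℝ F] {f : E → F} {s : Set E} {x y : E} {M : ℝ}
    (hs : Convex ℝ s) (hso : IsOpen s) (hf : ContDiffOn ℝ 2 f s)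
    (hM : ∀ z ∈ s, ‖fderiv ℝ (fderiv ℝ f) z‖ ≤ M) (hx : x ∈ s) (hy : y ∈ s) :
    ‖f y - f x - fderiv ℝ f x (y - x)‖ ≤ M * ‖y - x‖ ^ 2 := by
  have hM0 : 0 ≤ M := (ContinuousLinearMap.opNorm_nonneg _).trans (hM x hx)
  have hdf : ∀ z ∈ s, DifferentiableAt ℝ f z := fun z hz =>
    (hf.differentiableOn (by norm_num) z hz).differentiableAt (hso.mem_nhds hz)
  have hddf : ∀ z ∈ s, DifferentiableAt ℝ (fderiv ℝ f) z := fun z hz =>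
    ((hf.fderiv_of_isOpen (m := 1) hso (by norm_num)).differentiableOn one_ne_zero z
      hz).differentiableAt (hso.mem_nhds hz)
  have hseg : segment ℝ x y ⊆ s := hs.segment_subset hx hy
  have hlip : ∀ z ∈ segment ℝ x y, ‖fderiv ℝ f z - fderiv ℝ f x‖ ≤ M * ‖y - x‖ := fun z hz =>
    (hs.norm_image_sub_le_of_norm_fderiv_le hddf hM hx (hseg hz)).trans
      (mul_le_mul_of_nonneg_left (norm_sub_le_of_mem_segment hz) hM0)
  calc ‖f y - f x - fderiv ℝ f x (y - x)‖ ≤ M * ‖y - x‖ * ‖y - x‖ :=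
        (convex_segment x y).norm_image_sub_le_of_norm_fderiv_le' (fun z hz => hdf z (hseg hz))
          hlip (left_mem_segment ℝ x y) (right_mem_segment ℝ x y)
    _ = M * ‖y - x‖ ^ 2 := by ring

theorem abs_sub_sub_smul_fderiv_le
    {E : Type*} [NormedAddCommGroup E] [NormedSpace ℝ E] {f : E → ℝ} {x v : E} {r M t : ℝ}
    (hf : ContDiffOn ℝ 2 f (ball x r)) (hM : ∀ z ∈ ball x r, ‖fderiv ℝ (fderiv ℝ f) z‖ ≤ M)
    (ht : 0 ≤ t) (htv : t * ‖v‖ < r) :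
    |f (x + t • v) - f x - t * fderiv ℝ f x v| ≤ M * (t * ‖v‖) ^ 2 := by
  have hnorm : ‖t • v‖ = t * ‖v‖ := by rw [norm_smul, Real.norm_of_nonneg ht]
  have hx : x ∈ ball x r := mem_ball_self ((mul_nonneg ht (norm_nonneg v)).trans_lt htv)
  have hy : x + t • v ∈ ball x r := by
    rwa [mem_ball, dist_self_add_left, hnorm]
  simpa [← Real.norm_eq_abs, hnorm] using
    (convex_ball x r).norm_sub_sub_fderiv_le_of_norm_fderiv_fderiv_le isOpen_ball hf hM hx hy

theorem abs_log_one_add_sub_le {u δ : ℝ} (hu : |u| ≤ δ) (hδ : δ ≤ 1 / 2) :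
    |log (1 + u) - (u - u ^ 2 / 2)| ≤ 2 * δ ^ 3 := by
  have h := Real.abs_log_sub_add_sum_range_le (x := -u) (by rw [abs_neg]; linarith) 2
  simp only [Finset.sum_range_succ, Finset.sum_range_zero, abs_neg, sub_neg_eq_add] at h
  have hδ' : 0 ≤ 1 - |u| := by linarith
  calc |log (1 + u) - (u - u ^ 2 / 2)| ≤ |u| ^ 3 / (1 - |u|) := by
        convert h using 2; push_cast; ring
    _ ≤ 2 * |u| ^ 3 := by
        rw [div_le_iff₀ (by linarith)]; nlinarith [pow_nonneg (abs_nonneg u) 3]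
    _ ≤ 2 * δ ^ 3 := by gcongr

theorem abs_sq_sub_sq_le {a b ε δ : ℝ} (hab : |a - b| ≤ ε) (ha : |a| ≤ δ) (hb : |b| ≤ δ) :
    |a ^ 2 - b ^ 2| ≤ 2 * ε * δ := by
  have hsum : |a + b| ≤ 2 * δ := (abs_add_le a b).trans (by linarith)
  calc |a ^ 2 - b ^ 2| = |a + b| * |a - b| := by rw [sq_sub_sq, abs_mul]
    _ ≤ 2 * δ * ε := mul_le_mul hsum hab (abs_nonneg _) (by linarith [abs_nonneg a])
    _ = 2 * ε * δ := by ring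

section WeightedSums

variable {ι : Type*} [Fintype ι] {w : ι → ℝ}

/- With `y i = h(xᵢ; γ₁)`, `klCriterion w y` is the paper's `I₁₂(ξ; γ₁)`; the noncentrality
parameter `ζ(ξ, λ, γ₀)` is `weightedVariance w (fun i => λᵀ∇h(xᵢ; γ₀)) / 2`. -/
def weightedVariance (w a : ι → ℝ) : ℝ :=
  ∑ i, w i * a i ^ 2 - (∑ i, w i * a i) ^ 2

noncomputable def klCriterion (w y : ι → ℝ) : ℝ :=
  1 + log (∑ i, w i * y i) - ∑ i, w i * log (y i)

theorem weightedVariance_const_mul (w a : ι → ℝ) (c : ℝ) :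
    weightedVariance w (fun i => c * a i) = c ^ 2 * weightedVariance w a := by
  simp only [weightedVariance, mul_pow, mul_left_comm (w _), ← Finset.mul_sum]
  ring

theorem abs_sum_mul_le (hw : ∀ i, 0 ≤ w i) (hw1 : ∑ i, w i = 1) {a : ι → ℝ} {B : ℝ}
    (ha : ∀ i, |a i| ≤ B) : |∑ i, w i * a i| ≤ B :=
  calc |∑ i, w i * a i| ≤ ∑ i, w i * |a i| := by
        refine (Finset.abs_sum_le_sum_abs _ _).trans_eq (Finset.sum_congr rfl fun i _ => ?_)
        rw [abs_mul, abs_of_nonneg (hw i)]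
    _ ≤ ∑ i, w i * B := by gcongr with i; exacts [hw i, ha i]
    _ = B := by rw [← Finset.sum_mul, hw1, one_mul]

theorem abs_weightedVariance_sub_le (hw : ∀ i, 0 ≤ w i) (hw1 : ∑ i, w i = 1)
    {u v : ι → ℝ} {ε δ : ℝ} (huv : ∀ i, |u i - v i| ≤ ε) (hu : ∀ i, |u i| ≤ δ)
    (hv : ∀ i, |v i| ≤ δ) :
    |weightedVariance w u - weightedVariance w v| ≤ 4 * ε * δ := by
  have hsq : |∑ i, w i * (u i ^ 2 - v i ^ 2)| ≤ 2 * ε * δ :=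
    abs_sum_mul_le hw hw1 fun i => abs_sq_sub_sq_le (huv i) (hu i) (hv i)
  have hmean : |(∑ i, w i * u i) ^ 2 - (∑ i, w i * v i) ^ 2| ≤ 2 * ε * δ := by
    refine abs_sq_sub_sq_le ?_ (abs_sum_mul_le hw hw1 hu) (abs_sum_mul_le hw hw1 hv)
    simpa only [mul_sub, Finset.sum_sub_distrib] using abs_sum_mul_le hw hw1 huv
  calc |weightedVariance w u - weightedVariance w v|
        = |∑ i, w i * (u i ^ 2 - v i ^ 2)
            - ((∑ i, w i * u i) ^ 2 - (∑ i, w i * v i) ^ 2)| := by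
        simp only [weightedVariance, mul_sub, Finset.sum_sub_distrib]; ring_nf
    _ ≤ 2 * ε * δ + 2 * ε * δ := (abs_sub _ _).trans (add_le_add hsq hmean)
    _ = 4 * ε * δ := by ring

theorem abs_klCriterion_sub_one_sub_le (hw : ∀ i, 0 ≤ w i) (hw1 : ∑ i, w i = 1)
    {u : ι → ℝ} {δ : ℝ} (hu : ∀ i, |u i| ≤ δ) (hδ : δ ≤ 1 / 2) :
    |klCriterion w (fun i => 1 + u i) - 1 - weightedVariance w u / 2| ≤ 4 * δ ^ 3 := by
  have hmean : ∑ i, w i * (1 + u i) = 1 + ∑ i, w i * u i := by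
    simp only [mul_add, mul_one, Finset.sum_add_distrib, hw1]
  have hlog_mean := abs_log_one_add_sub_le (abs_sum_mul_le hw hw1 hu) hδ
  have hlog_points := abs_sum_mul_le hw hw1 fun i => abs_log_one_add_sub_le (hu i) hδ
  calc |klCriterion w (fun i => 1 + u i) - 1 - weightedVariance w u / 2|
        = |(log (1 + ∑ i, w i * u i) - (∑ i, w i * u i - (∑ i, w i * u i) ^ 2 / 2))
            - ∑ i, w i * (log (1 + u i) - (u i - u i ^ 2 / 2))| := by
        simp only [klCriterion, weightedVariance, hmean, mul_sub, Finset.sum_sub_distrib,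
          mul_div_assoc', ← Finset.sum_div]
        ring_nf
    _ ≤ 2 * δ ^ 3 + 2 * δ ^ 3 := (abs_sub _ _).trans (add_le_add hlog_mean hlog_points)
    _ = 4 * δ ^ 3 := by ring

theorem abs_klCriterion_sub_one_sub_le_of_approx (hw : ∀ i, 0 ≤ w i) (hw1 : ∑ i, w i = 1)
    {y d : ι → ℝ} {t ε δ : ℝ} (hyd : ∀ i, |y i - 1 - t * d i| ≤ ε) (hy : ∀ i, |y i - 1| ≤ δ)
    (hd : ∀ i, |t * d i| ≤ δ) (hδ : δ ≤ 1 / 2) :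
    |klCriterion w y - 1 - t ^ 2 / 2 * weightedVariance w d| ≤ 4 * δ ^ 3 + 2 * ε * δ := by
  have hkl := abs_klCriterion_sub_one_sub_le hw hw1 hy hδ
  have hvar := abs_weightedVariance_sub_le hw hw1 hyd hy hd
  simp only [add_sub_cancel, weightedVariance_const_mul] at hkl hvar
  calc |klCriterion w y - 1 - t ^ 2 / 2 * weightedVariance w d|
        = |(klCriterion w y - 1 - weightedVariance w (fun i => y i - 1) / 2)
            + (weightedVariance w (fun i => y i - 1) - t ^ 2 * weightedVariance w d) / 2| := by
        ring_nf
    _ ≤ 4 * δ ^ 3 + 4 * ε * δ / 2 := by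
        refine (abs_add_le _ _).trans (add_le_add hkl ?_)
        rw [abs_div, abs_two]; gcongr
    _ = 4 * δ ^ 3 + 2 * ε * δ := by ring

end WeightedSums

theorem abs_klCriterion_sub_one_sub_le_of_taylor
    {ι E : Type*} [Fintype ι] [NormedAddCommGroup E] [NormedSpace ℝ E]
    {f : ι → E → ℝ} {w : ι → ℝ} {γ₀ lam : E} {r M₁ M₂ L t : ℝ}
    (hw : ∀ i, 0 ≤ w i) (hw1 : ∑ i, w i = 1)
    (hone : ∀ i, f i γ₀ = 1) (hf : ∀ i, ContDiffOn ℝ 2 (f i) (ball γ₀ r))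
    (hM₁ : ∀ i, ‖fderiv ℝ (f i) γ₀‖ ≤ M₁)
    (hM₂ : ∀ i, ∀ γ ∈ ball γ₀ r, ‖fderiv ℝ (fderiv ℝ (f i)) γ‖ ≤ M₂)
    (hlam : ‖lam‖ ≤ L) (ht : 0 < t) (ht1 : t ≤ 1) (htr : t * L < r)
    (htK : t * (M₁ * L + M₂ * L ^ 2) ≤ 1 / 2) :
    |klCriterion w (fun i => f i (γ₀ + t • lam)) - 1
        - t ^ 2 / 2 * weightedVariance w (fun i => fderiv ℝ (f i) γ₀ lam)|
      ≤ (4 * (M₁ * L + M₂ * L ^ 2) ^ 3 + 2 * M₂ * L ^ 2 * (M₁ * L + M₂ * L ^ 2)) * t ^ 3 := by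
  obtain ⟨i₀⟩ : Nonempty ι := by
    by_contra hempty
    simp [not_nonempty_iff.mp hempty] at hw1
  have htL : t * ‖lam‖ ≤ t * L := mul_le_mul_of_nonneg_left hlam ht.le
  have hγ₀ : γ₀ ∈ ball γ₀ r :=
    mem_ball_self ((mul_nonneg ht.le (norm_nonneg lam)).trans_lt (htL.trans_lt htr))
  have hM₂0 : 0 ≤ M₂ := (ContinuousLinearMap.opNorm_nonneg _).trans (hM₂ i₀ γ₀ hγ₀)
  have htaylor : ∀ i, |f i (γ₀ + t • lam) - 1 - t * fderiv ℝ (f i) γ₀ lam| ≤ M₂ * (t * L) ^ 2 :=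
    fun i => by
      rw [← hone i]
      exact (abs_sub_sub_smul_fderiv_le (hf i) (hM₂ i) ht.le (htL.trans_lt htr)).trans
        (by gcongr)
  have hgrad : ∀ i, |t * fderiv ℝ (f i) γ₀ lam| ≤ t * (M₁ * L) := fun i => by
    rw [abs_mul, abs_of_pos ht, ← Real.norm_eq_abs]
    gcongr
    exact ((fderiv ℝ (f i) γ₀).le_of_opNorm_le (hM₁ i) lam).trans
      (mul_le_mul_of_nonneg_left hlam ((norm_nonneg _).trans (hM₁ i)))
  have hquad : M₂ * (t * L) ^ 2 ≤ t * (M₂ * L ^ 2) := by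
    have := mul_nonneg (mul_nonneg ht.le (mul_nonneg hM₂0 (sq_nonneg L))) (sub_nonneg.2 ht1)
    linarith
  have hK : t * (M₁ * L) ≤ t * (M₁ * L + M₂ * L ^ 2) := by
    have := mul_nonneg ht.le (mul_nonneg hM₂0 (sq_nonneg L))
    linarith
  have hshift : ∀ i, |f i (γ₀ + t • lam) - 1| ≤ t * (M₁ * L + M₂ * L ^ 2) := fun i => by
    linarith [abs_sub_abs_le_abs_sub (f i (γ₀ + t • lam) - 1) (t * fderiv ℝ (f i) γ₀ lam),
      htaylor i, hgrad i]
  refine (abs_klCriterion_sub_one_sub_le_of_approx hw hw1 htaylor hshift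
    (fun i => (hgrad i).trans hK) htK).trans_eq ?_
  ring

theorem stmt_9_general (p s : ℕ) (X : Set (Fin p → ℝ))
    (γ₀ : EuclideanSpace ℝ (Fin s)) (r : ℝ) (hr : 0 < r)
    (h : (Fin p → ℝ) → EuclideanSpace ℝ (Fin s) → ℝ)
    (hone : ∀ x ∈ X, h x γ₀ = 1)
    (hsmooth : ∀ x ∈ X, ContDiffOn ℝ 2 (h x) (Metric.ball γ₀ r))
    (M₁ M₂ L : ℝ)
    (hM₁ : ∀ x ∈ X, ‖fderiv ℝ (h x) γ₀‖ ≤ M₁)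
    (hM₂ : ∀ x ∈ X, ∀ γ ∈ Metric.ball γ₀ r, ‖fderiv ℝ (fun γ' => fderiv ℝ (h x) γ') γ‖ ≤ M₂) :
    ∃ C > 0, ∃ N : ℕ, ∀ n : ℕ, N ≤ n →
      ∀ lam : EuclideanSpace ℝ (Fin s), ‖lam‖ ≤ L →
      ∀ (k : ℕ) (x : Fin k → (Fin p → ℝ)), (∀ i, x i ∈ X) →
      ∀ w : Fin k → ℝ, (∀ i, 0 ≤ w i) → ∑ i, w i = 1 →
      |(n : ℝ) * ((1 + Real.log (∑ i, w i * h (x i) (γ₀ + (Real.sqrt n)⁻¹ • lam))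
            - ∑ i, w i * Real.log (h (x i) (γ₀ + (Real.sqrt n)⁻¹ • lam))) - 1)
        - (1 / 2) * ((∑ i, w i * (fderiv ℝ (h (x i)) γ₀ lam) ^ 2)
            - (∑ i, w i * fderiv ℝ (h (x i)) γ₀ lam) ^ 2)|
      ≤ C / Real.sqrt n := by
  set K := M₁ * L + M₂ * L ^ 2
  set c := 4 * K ^ 3 + 2 * M₂ * L ^ 2 * K
  have hsmall : Tendsto (fun n : ℕ => (√(n : ℝ))⁻¹) atTop (𝓝 0) :=
    tendsto_inv_atTop_zero.comp (tendsto_sqrt_atTop.comp tendsto_natCast_atTop_atTop)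
  obtain ⟨N, hN⟩ := eventually_atTop.1 <| (eventually_gt_atTop 0).and <|
    (hsmall.eventually_lt_const one_pos).and <|
    ((hsmall.mul_const L).eventually_lt_const (by simpa using hr)).and
    ((hsmall.mul_const K).eventually_lt_const (by simp : (0 : ℝ) * K < 1 / 2))
  refine ⟨|c| + 1, by positivity, N, fun n hn lam hlam k x hx w hw hw1 => ?_⟩
  obtain ⟨hn0, ht1, htL, htK⟩ := hN n hn
  set t := (√(n : ℝ))⁻¹ with ht_def
  have ht : 0 < t := by positivity
  have hnt : (n : ℝ) * t ^ 2 = 1 := by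
    rw [ht_def, inv_pow, Real.sq_sqrt n.cast_nonneg]
    field_simp
  clear_value t
  have hkl := abs_klCriterion_sub_one_sub_le_of_taylor (f := fun i => h (x i)) hw hw1
    (fun i => hone _ (hx i)) (fun i => hsmooth _ (hx i)) (fun i => hM₁ _ (hx i))
    (fun i => hM₂ _ (hx i)) hlam ht ht1.le htL htK.le
  set V := weightedVariance w (fun i => fderiv ℝ (h (x i)) γ₀ lam)
  change |(n : ℝ) * (klCriterion w (fun i => h (x i) (γ₀ + t • lam)) - 1) - 1 / 2 * V|
    ≤ (|c| + 1) / √(n : ℝ)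
  calc _ = |(n : ℝ) * (klCriterion w (fun i => h (x i) (γ₀ + t • lam)) - 1 - t ^ 2 / 2 * V)| := by
        congr 1
        linear_combination V / 2 * hnt
    _ = (n : ℝ) * |klCriterion w (fun i => h (x i) (γ₀ + t • lam)) - 1 - t ^ 2 / 2 * V| := by
        rw [abs_mul, Nat.abs_cast]
    _ ≤ (n : ℝ) * (c * t ^ 3) := by gcongr
    _ = c * t := by linear_combination (c * t) * hnt
    _ ≤ (|c| + 1) * t := by gcongr; linarith [le_abs_self c]
    _ = (|c| + 1) / √(n : ℝ) := by rw [ht_def, div_eq_mul_inv]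

/-- Uniform approximation of the KL-criterion by the noncentrality parameter:
sup over designs ξ of |n(I₁₂(ξ;γ₀+λ/√n) - 1) - ζ(ξ,λ,γ₀)| ≤ C/√n, uniformly
over ‖λ‖ ≤ L, with C and N depending only on L, M₁, M₂ and r. -/
theorem stmt_9 (p s : ℕ) (X : Set (Fin p → ℝ))
    (γ₀ : EuclideanSpace ℝ (Fin s)) (r : ℝ) (hr : 0 < r)
    (h : (Fin p → ℝ) → EuclideanSpace ℝ (Fin s) → ℝ)
    (hpos : ∀ x ∈ X, ∀ γ, 0 < h x γ)
    (hone : ∀ x ∈ X, h x γ₀ = 1)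
    (hsmooth : ∀ x ∈ X, ContDiffOn ℝ 2 (h x) (Metric.ball γ₀ r))
    (M₁ M₂ L : ℝ) (hL : 0 < L)
    (hM₁ : ∀ x ∈ X, ‖fderiv ℝ (h x) γ₀‖ ≤ M₁)
    (hM₂ : ∀ x ∈ X, ∀ γ ∈ Metric.ball γ₀ r, ‖fderiv ℝ (fun γ' => fderiv ℝ (h x) γ') γ‖ ≤ M₂) :
    ∃ C > 0, ∃ N : ℕ, ∀ n : ℕ, N ≤ n →
      ∀ lam : EuclideanSpace ℝ (Fin s), ‖lam‖ ≤ L →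
      ∀ (k : ℕ) (x : Fin k → (Fin p → ℝ)), (∀ i, x i ∈ X) →
      ∀ w : Fin k → ℝ, (∀ i, 0 ≤ w i) → ∑ i, w i = 1 →
      |(n : ℝ) * ((1 + Real.log (∑ i, w i * h (x i) (γ₀ + (Real.sqrt n)⁻¹ • lam))
            - ∑ i, w i * Real.log (h (x i) (γ₀ + (Real.sqrt n)⁻¹ • lam))) - 1)
        - (1 / 2) * ((∑ i, w i * (fderiv ℝ (h (x i)) γ₀ lam) ^ 2)
            - (∑ i, w i * fderiv ℝ (h (x i)) γ₀ lam) ^ 2)|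
      ≤ C / Real.sqrt n :=
  stmt_9_general p s X γ₀ r hr h hone hsmooth M₁ M₂ L hM₁ hM₂
end

section
/- Let n ≥ 2 and let h₁, …, hₙ be positive reals with 0 < h̲ = h₁ ≤ h₂ ≤ ⋯ ≤ hₙ = h̄ < ∞. Let Aₙ = (1/n)·Σᵢ hᵢ and Gₙ = (Πᵢ hᵢ)^{1/n} be the arithmetic and geometric means, and Dₙ = log Aₙ − log Gₙ. Then Dₙ ≥ (2/n)·[ log((h̲+h̄)/2) − (1/2)(log h̲ + log h̄) ]. Moreover, equality holds when h₁ = h̲, hₙ = h̄, and hᵢ = (h̲+h̄)/2 for all i = 2, …, n−1. -/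
/-!
Replace the two extreme values `h̲, h̄` by their midpoint `m`. This keeps the arithmetic mean
and raises `∑ log hᵢ` by `2 log m - log h̲ - log h̄`, so Jensen's inequality for `log`, applied
to the modified values, gives the bound. When all middle values already equal `m`, the modified
values are constant and Jensen's inequality loses nothing.
-/

open Finset Real

variable {ι : Type*} [Fintype ι]

theorem Real.sum_log_div_card_le_log_sum_div_card [Nonempty ι] {x : ι → ℝ}
    (hx : ∀ i, 0 < x i) :
    (∑ i, log (x i)) / Fintype.card ι ≤ log ((∑ i, x i) / Fintype.card ι) := by
  have hmean : ∀ f : ι → ℝ, ∑ i, (Fintype.card ι : ℝ)⁻¹ • f i = (∑ i, f i) / Fintype.card ι :=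
    fun f => by rw [← smul_sum, smul_eq_mul, div_eq_inv_mul]
  simpa only [hmean] using strictConcaveOn_log_Ioi.concaveOn.le_map_sum (t := univ)
    (w := fun _ => (Fintype.card ι : ℝ)⁻¹) (fun _ _ => by positivity) (by simp) fun i _ => hx i

noncomputable def logMidpointGap (u v : ℝ) : ℝ :=
  log ((u + v) / 2) - (1 / 2) * (log u + log v)

theorem sum_sub_eq_of_eq_off_pair {f g : ι → ℝ} {a b : ι} (hab : a ≠ b)
    (hfg : ∀ i, i ≠ a ∧ i ≠ b → f i = g i) :
    ∑ i, f i - ∑ i, g i = (f a - g a) + (f b - g b) := by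
  rw [← sum_sub_distrib]
  exact Fintype.sum_eq_add a b hab fun i hi => sub_eq_zero.mpr (hfg i hi)

theorem two_div_card_mul_logMidpointGap_le {h : ι → ℝ} (hpos : ∀ i, 0 < h i) {a b : ι}
    (hab : a ≠ b) :
    2 / Fintype.card ι * logMidpointGap (h a) (h b) ≤
      log ((∑ i, h i) / Fintype.card ι) - (∑ i, log (h i)) / Fintype.card ι := by
  classical
  have : Nonempty ι := ⟨a⟩
  set m := (h a + h b) / 2 with hm
  set y : ι → ℝ := fun i => if i = a ∨ i = b then m else h i
  have hy_off : ∀ i, i ≠ a ∧ i ≠ b → y i = h i := fun i hi => if_neg (not_or.mpr hi)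
  have hya : y a = m := if_pos (Or.inl rfl)
  have hyb : y b = m := if_pos (Or.inr rfl)
  have hy_pos : ∀ i, 0 < y i := fun i => by
    by_cases hi : i = a ∨ i = b
    · simp only [y, if_pos hi, m]; linarith [hpos a, hpos b]
    · simp only [y, if_neg hi]; exact hpos i
  have hsum : ∑ i, y i = ∑ i, h i := by
    have := sum_sub_eq_of_eq_off_pair hab hy_off
    rw [hya, hyb] at this
    linarith [hm]
  have hlog_sum : ∑ i, log (y i) =
      ∑ i, log (h i) + (2 * log m - log (h a) - log (h b)) := by
    have := sum_sub_eq_of_eq_off_pair (f := fun i => log (y i)) hab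
      fun i hi => congrArg log (hy_off i hi)
    simp only [hya, hyb] at this
    linarith
  have hjensen := sum_log_div_card_le_log_sum_div_card hy_pos
  rw [hsum, hlog_sum, add_div] at hjensen
  have hgap : 2 / Fintype.card ι * logMidpointGap (h a) (h b) =
      (2 * log m - log (h a) - log (h b)) / Fintype.card ι := by
    unfold logMidpointGap; ring
  linarith

theorem log_sum_div_card_sub_eq_of_eq_midpoint {h : ι → ℝ} {a b : ι} (hab : a ≠ b)
    (hmid : ∀ i, i ≠ a ∧ i ≠ b → h i = (h a + h b) / 2) :
    log ((∑ i, h i) / Fintype.card ι) - (∑ i, log (h i)) / Fintype.card ι =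
      2 / Fintype.card ι * logMidpointGap (h a) (h b) := by
  set m := (h a + h b) / 2 with hm
  have hcard : (Fintype.card ι : ℝ) ≠ 0 := by
    have : Nonempty ι := ⟨a⟩
    exact_mod_cast Fintype.card_ne_zero
  have hsum : ∑ i, h i = Fintype.card ι * m := by
    have := sum_sub_eq_of_eq_off_pair (g := fun _ => m) hab hmid
    simp only [sum_const, card_univ, nsmul_eq_mul] at this
    linarith [hm]
  have hlog_sum : ∑ i, log (h i) =
      Fintype.card ι * log m + (log (h a) - log m) + (log (h b) - log m) := by
    have := sum_sub_eq_of_eq_off_pair (f := fun i => log (h i)) (g := fun _ => log m) hab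
      fun i hi => congrArg log (hmid i hi)
    simp only [sum_const, card_univ, nsmul_eq_mul] at this
    linarith [hm]
  rw [hsum, mul_div_cancel_left₀ _ hcard, hlog_sum]
  unfold logMidpointGap
  field_simp
  ring

/-- Lower bound for Dₙ = log Aₙ - log Gₙ of ordered positive reals
h₁ ≤ ⋯ ≤ hₙ, with equality when the middle values all equal (h̲+h̄)/2. -/
theorem stmt_11 (n : ℕ) (hn : 2 ≤ n) (h : Fin n → ℝ) (hmono : Monotone h)
    (hpos : 0 < h ⟨0, by omega⟩) :
    let hlo : ℝ := h ⟨0, by omega⟩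
    let hhi : ℝ := h ⟨n - 1, by omega⟩
    let D : ℝ := Real.log ((∑ i, h i) / n) - (∑ i, Real.log (h i)) / n
    ((2 / (n : ℝ)) * (Real.log ((hlo + hhi) / 2)
        - (1 / 2) * (Real.log hlo + Real.log hhi)) ≤ D) ∧
    ((∀ i : Fin n, (i : ℕ) ≠ 0 → (i : ℕ) ≠ n - 1 → h i = (hlo + hhi) / 2) →
      D = (2 / (n : ℝ)) * (Real.log ((hlo + hhi) / 2)
        - (1 / 2) * (Real.log hlo + Real.log hhi))) := by
  intro hlo hhi D
  have hab : (⟨0, by omega⟩ : Fin n) ≠ ⟨n - 1, by omega⟩ := by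
    simp only [ne_eq, Fin.mk.injEq]; omega
  have hpos_all : ∀ i, 0 < h i := fun i => hpos.trans_le (hmono (Fin.le_def.mpr (Nat.zero_le _)))
  have bound := two_div_card_mul_logMidpointGap_le hpos_all hab
  rw [Fintype.card_fin] at bound
  refine ⟨bound, fun hmid => ?_⟩
  have eq := log_sum_div_card_sub_eq_of_eq_midpoint (h := h) hab fun i hi =>
    hmid i (fun h0 => hi.1 (Fin.ext h0)) (fun h1 => hi.2 (Fin.ext h1))
  rwa [Fintype.card_fin] at eq
end

section
/- Let b > 1 and n ≥ 1, and define D(r) = log( (r + (n−r)·b)/n ) − ((n−r)/n)·log b for real r ∈ [0, n]. Then D attains its maximum over [0, n] at the unique point r* = n·( b/(b−1) − 1/log b ), which lies in (0, n), and the maximum value is D(r*) = H − 1 − log H, where H = (log b)/(b−1) ∈ (0,1). -/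
/-!
Writing `A r = (r + (n - r) b) / n`, which is affine in `r` and runs from `b` down to `1` on
`[0, n]`, one has `(n - r) / n = (A r - 1) / (b - 1)`, so `D r = log (A r) - H (A r - 1)`.
The concave function `x ↦ log x - H (x - 1)` is maximised exactly at `x = H⁻¹`, by
`log (H x) ≤ H x - 1` with equality only at `H x = 1`; and `A r* = H⁻¹`.
-/

open Real

lemma log_sub_mul_sub_one_le {c x : ℝ} (hc : 0 < c) (hx : 0 < x) :
    log x - c * (x - 1) ≤ c - 1 - log c := by
  have := log_le_sub_one_of_pos (mul_pos hc hx)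
  rw [log_mul hc.ne' hx.ne'] at this
  linarith

lemma log_sub_mul_sub_one_lt {c x : ℝ} (hc : 0 < c) (hx : 0 < x) (hne : x ≠ c⁻¹) :
    log x - c * (x - 1) < c - 1 - log c := by
  have hcx : c * x ≠ 1 := fun h => hne (eq_inv_of_mul_eq_one_right h)
  have := log_lt_sub_one_of_pos (mul_pos hc hx) hcx
  rw [log_mul hc.ne' hx.ne'] at this
  linarith

lemma log_inv_sub_mul_inv_sub_one {c : ℝ} (hc : c ≠ 0) :
    log c⁻¹ - c * (c⁻¹ - 1) = c - 1 - log c := by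
  rw [log_inv, mul_sub, mul_inv_cancel₀ hc]
  ring

lemma sub_one_lt_mul_log {b : ℝ} (hb : 1 < b) : b - 1 < b * log b := by
  have h := log_lt_sub_one_of_pos (inv_pos.mpr (by linarith)) (inv_ne_one.mpr hb.ne')
  rw [log_inv] at h
  have : b * (1 - b⁻¹) = b - 1 := by field_simp
  nlinarith

lemma log_div_sub_one_mem_Ioo {b : ℝ} (hb : 1 < b) : log b / (b - 1) ∈ Set.Ioo 0 1 := by
  have hb1 : 0 < b - 1 := by linarith
  refine ⟨div_pos (log_pos hb) hb1, (div_lt_one hb1).mpr ?_⟩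
  exact log_lt_sub_one_of_pos (by linarith) hb.ne'

section Affine

variable {b n : ℝ}

lemma sub_div_mul_log_eq (hn : n ≠ 0) (hb : b ≠ 1) (r : ℝ) :
    (n - r) / n * log b = log b / (b - 1) * ((r + (n - r) * b) / n - 1) := by
  have : b - 1 ≠ 0 := sub_ne_zero.mpr hb
  field_simp
  ring

lemma add_sub_mul_div_eq_inv_log_div (hn : n ≠ 0) (hb : b ≠ 1) (hlog : log b ≠ 0) :
    (n * (b / (b - 1) - 1 / log b) + (n - n * (b / (b - 1) - 1 / log b)) * b) / n =
      (log b / (b - 1))⁻¹ := by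
  have : b - 1 ≠ 0 := sub_ne_zero.mpr hb
  simp only [inv_div]
  field_simp
  ring

lemma add_sub_mul_div_injective (hn : n ≠ 0) (hb : b ≠ 1) :
    Function.Injective fun r : ℝ => (r + (n - r) * b) / n := by
  intro r s h
  have : (r - s) * (1 - b) = 0 := by
    simp only at h
    field_simp at h
    linarith
  simpa [sub_eq_zero, sub_ne_zero.mpr hb.symm] using this

lemma one_le_add_sub_mul_div (hn : 0 < n) (hb : 1 ≤ b) {r : ℝ} (hr : r ∈ Set.Icc 0 n) :
    1 ≤ (r + (n - r) * b) / n := by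
  rw [le_div_iff₀ hn]
  nlinarith [hr.1, hr.2]

lemma mul_sub_div_log_mem_Ioo (hn : 0 < n) (hb : 1 < b) :
    n * (b / (b - 1) - 1 / log b) ∈ Set.Ioo 0 n := by
  have hb1 : 0 < b - 1 := by linarith
  have hlog : 0 < log b := log_pos hb
  have hlower : 1 / log b < b / (b - 1) := by
    rw [div_lt_div_iff₀ hlog hb1]
    linarith [sub_one_lt_mul_log hb]
  have hupper : 1 / (b - 1) < 1 / log b :=
    one_div_lt_one_div_of_lt hlog (log_lt_sub_one_of_pos (by linarith) hb.ne')
  have hsplit : b / (b - 1) = 1 + 1 / (b - 1) := by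
    field_simp
    ring
  constructor
  · exact mul_pos hn (by linarith)
  · nlinarith

end Affine

/-- The continuous relaxation D(r) = log((r+(n-r)b)/n) - ((n-r)/n) log b attains its
maximum over [0,n] uniquely at r* = n(b/(b-1) - 1/log b) ∈ (0,n), with maximum value
H - 1 - log H where H = log b/(b-1) ∈ (0,1). -/
theorem stmt_13 (b : ℝ) (hb : 1 < b) (n : ℕ) (hn : 1 ≤ n) :
    let D : ℝ → ℝ := fun r =>
      Real.log ((r + ((n : ℝ) - r) * b) / n) - (((n : ℝ) - r) / n) * Real.log b
    let rstar : ℝ := (n : ℝ) * (b / (b - 1) - 1 / Real.log b)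
    let H : ℝ := Real.log b / (b - 1)
    rstar ∈ Set.Ioo (0 : ℝ) n ∧
    (∀ r ∈ Set.Icc (0 : ℝ) n, D r ≤ D rstar) ∧
    (∀ r ∈ Set.Icc (0 : ℝ) n, D r = D rstar → r = rstar) ∧
    (0 < H ∧ H < 1) ∧
    D rstar = H - 1 - Real.log H := by
  intro D rstar H
  set A : ℝ → ℝ := fun r => (r + ((n : ℝ) - r) * b) / n
  have hn0 : (0 : ℝ) < n := by exact_mod_cast hn
  have hH : 0 < H ∧ H < 1 := log_div_sub_one_mem_Ioo hb
  have hD : ∀ r, D r = log (A r) - H * (A r - 1) := fun r => by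
    simp only [D, A, H, sub_div_mul_log_eq hn0.ne' hb.ne' r]
  have hAstar : A rstar = H⁻¹ := add_sub_mul_div_eq_inv_log_div hn0.ne' hb.ne' (log_pos hb).ne'
  have hApos : ∀ r ∈ Set.Icc (0 : ℝ) n, 0 < A r := fun r hr =>
    one_pos.trans_le (one_le_add_sub_mul_div hn0 hb.le hr)
  have hDstar : D rstar = H - 1 - log H := by
    rw [hD, hAstar, log_inv_sub_mul_inv_sub_one hH.1.ne']
  refine ⟨mul_sub_div_log_mem_Ioo hn0 hb, fun r hr => ?_, fun r hr heq => ?_, hH, hDstar⟩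
  · rw [hDstar, hD]
    exact log_sub_mul_sub_one_le hH.1 (hApos r hr)
  · by_contra hne
    have hAne : A r ≠ H⁻¹ := hAstar ▸ (add_sub_mul_div_injective hn0.ne' hb.ne').ne hne
    have := log_sub_mul_sub_one_lt hH.1 (hApos r hr) hAne
    rw [← hD, heq, hDstar] at this
    exact this.false
end

section
/- Let 0 < ε ≤ 1/2, let ξ₁,…,ξ_k be nonnegative weights with Σᵢ ξᵢ = 1, and let Z₁,…,Z_k be real numbers with |Zᵢ| ≤ ε for all i. Write E_ξZ = Σᵢ ξᵢ Zᵢ and E_ξZ² = Σᵢ ξᵢ Zᵢ². Then | log(1 + E_ξZ) − Σᵢ ξᵢ log(1 + Zᵢ) − (1/2)·( E_ξZ² − (E_ξZ)² ) | ≤ (2/3)·ε³/(1−ε). -/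
/-!
With `R z = log (1 + z) - z + z² / 2`, the linear and quadratic terms cancel and the quantity is
`R (E_ξ Z) - E_ξ R(Z)`. Both `E_ξ Z` and the `Zᵢ` lie in `[-ε, ε]`, where the logarithmic series
gives `|R z| ≤ ε³ / (3 (1 - ε))`.
-/

open Finset Real

/-- Expand `log (1 + z) = -∑ (-z)^(n+1)/(n+1)`: the tail from the cubic term on is bounded by
`(1/3) ∑_{m ≥ 3} ε^m = ε³ / (3 (1 - ε))`. -/
lemma abs_log_one_add_sub_add_sq_div_two_le {ε z : ℝ} (hz : |z| ≤ ε) (hε : ε < 1) :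
    |log (1 + z) - z + z ^ 2 / 2| ≤ ε ^ 3 / (3 * (1 - ε)) := by
  have hε0 : 0 ≤ ε := (abs_nonneg z).trans hz
  have hlog : HasSum (fun n : ℕ => (-z) ^ (n + 3) / (n + 3))
      (-(log (1 + z) - z + z ^ 2 / 2)) := by
    have h := (hasSum_nat_add_iff' 2).mpr
      (hasSum_pow_div_log_of_abs_lt_one (x := -z) (by rw [abs_neg]; linarith))
    norm_num [Finset.sum_range_succ] at h
    rw [show -(log (1 + z) - z + z ^ 2 / 2) = -log (1 + z) - (-z + z ^ 2 / 2) by ring]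
    exact h.congr_fun fun n => by ring_nf
  have htail : HasSum (fun n : ℕ => ε ^ 3 / 3 * ε ^ n) (ε ^ 3 / 3 * (1 - ε)⁻¹) :=
    (hasSum_geometric_of_lt_one hε0 hε).mul_left _
  have hterm (n : ℕ) : ‖(-z) ^ (n + 3) / (n + 3)‖ ≤ ε ^ 3 / 3 * ε ^ n := by
    rw [Real.norm_eq_abs, abs_div, abs_pow, abs_neg, abs_of_pos (by positivity : (0 : ℝ) < n + 3)]
    calc |z| ^ (n + 3) / (n + 3) ≤ ε ^ (n + 3) / 3 := by
          gcongr
          exact le_add_of_nonneg_left n.cast_nonneg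
      _ = ε ^ 3 / 3 * ε ^ n := by ring
  have := hlog.norm_le_of_bounded htail hterm
  rwa [Real.norm_eq_abs, abs_neg, ← div_eq_mul_inv, div_div] at this

lemma abs_sum_mul_le_of_abs_le {ι : Type*} {s : Finset ι} {w a : ι → ℝ} {C : ℝ}
    (hw : ∀ i ∈ s, 0 ≤ w i) (hw1 : ∑ i ∈ s, w i = 1) (ha : ∀ i ∈ s, |a i| ≤ C) :
    |∑ i ∈ s, w i * a i| ≤ C :=
  calc |∑ i ∈ s, w i * a i| ≤ ∑ i ∈ s, |w i * a i| := abs_sum_le_sum_abs _ _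
    _ ≤ ∑ i ∈ s, w i * C := sum_le_sum fun i hi => by
        rw [abs_mul, abs_of_nonneg (hw i hi)]
        exact mul_le_mul_of_nonneg_left (ha i hi) (hw i hi)
    _ = C := by rw [← sum_mul, hw1, one_mul]

theorem stmt_15_general (ε : ℝ) (hε : ε ≤ 1 / 2)
    (k : ℕ) (w : Fin k → ℝ) (hw : ∀ i, 0 ≤ w i) (hw1 : ∑ i, w i = 1)
    (Z : Fin k → ℝ) (hZ : ∀ i, |Z i| ≤ ε) :
    |Real.log (1 + ∑ i, w i * Z i) - (∑ i, w i * Real.log (1 + Z i))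
        - (1 / 2) * ((∑ i, w i * Z i ^ 2) - (∑ i, w i * Z i) ^ 2)|
      ≤ (2 / 3) * ε ^ 3 / (1 - ε) := by
  have hε1 : ε < 1 := by linarith
  set R : ℝ → ℝ := fun z => log (1 + z) - z + z ^ 2 / 2
  have hR (z : ℝ) (hz : |z| ≤ ε) : |R z| ≤ ε ^ 3 / (3 * (1 - ε)) :=
    abs_log_one_add_sub_add_sq_div_two_le hz hε1
  set S := ∑ i, w i * Z i
  have hS : |S| ≤ ε := abs_sum_mul_le_of_abs_le (fun i _ => hw i) hw1 (fun i _ => hZ i)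
  have hsplit : log (1 + S) - (∑ i, w i * log (1 + Z i))
        - (1 / 2) * ((∑ i, w i * Z i ^ 2) - S ^ 2) = R S - ∑ i, w i * R (Z i) := by
    simp only [R, mul_add, mul_sub, sum_add_distrib, sum_sub_distrib, ← mul_div_assoc,
      ← sum_div]
    ring
  rw [hsplit]
  calc |R S - ∑ i, w i * R (Z i)| ≤ |R S| + |∑ i, w i * R (Z i)| := abs_sub _ _
    _ ≤ ε ^ 3 / (3 * (1 - ε)) + ε ^ 3 / (3 * (1 - ε)) :=
        add_le_add (hR S hS)
          (abs_sum_mul_le_of_abs_le (fun i _ => hw i) hw1 (fun i _ => hR (Z i) (hZ i)))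
    _ = (2 / 3) * ε ^ 3 / (1 - ε) := by
        field_simp [(sub_pos.mpr hε1).ne']
        ring

/-- Series-expansion estimate: for |Zᵢ| ≤ ε ≤ 1/2, the error of approximating
log(1+EZ) - E log(1+Z) by the half-variance (1/2)(EZ² - (EZ)²) is at most
(2/3)ε³/(1-ε). -/
theorem stmt_15 (ε : ℝ) (hε0 : 0 < ε) (hε : ε ≤ 1 / 2)
    (k : ℕ) (w : Fin k → ℝ) (hw : ∀ i, 0 ≤ w i) (hw1 : ∑ i, w i = 1)
    (Z : Fin k → ℝ) (hZ : ∀ i, |Z i| ≤ ε) :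
    |Real.log (1 + ∑ i, w i * Z i) - (∑ i, w i * Real.log (1 + Z i))
        - (1 / 2) * ((∑ i, w i * Z i ^ 2) - (∑ i, w i * Z i) ^ 2)|
      ≤ (2 / 3) * ε ^ 3 / (1 - ε) :=
  stmt_15_general ε hε k w hw hw1 Z hZ
end

section
/- Let n ≥ 2, let h₁, …, h_{n−1} be positive reals with arithmetic mean A = (1/(n−1))·Σᵢ hᵢ and geometric mean G = (Πᵢ hᵢ)^{1/(n−1)}, and let 0 < h̲ ≤ hᵢ ≤ h̄ for all i. Define, for a ∈ [h̲, h̄], Dₙ(a) = log( ((n−1)·A + a)/n ) − (1/n)·log( G^{n−1}·a ). Then Dₙ is decreasing on [h̲, min(A,h̄)] and increasing on [max(A,h̲), h̄]; consequently the maximum of Dₙ over [h̲, h̄] is attained at an endpoint: max_{a∈[h̲,h̄]} Dₙ(a) = max( Dₙ(h̲), Dₙ(h̄) ). -/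
/-!
With `S` the sum and `C` the product of the fixed values, `D a = log ((S + a) / n) - log (C a) / n`
has derivative `1 / (S + a) - 1 / (n a)`, which has the sign of `a - S / (n - 1) = a - A`.
So `D` decreases up to the mean `A` and increases after it; since `A` lies in `[h̲, h̄]`,
the maximum over that interval is at an endpoint.
-/

open Real Set

/-- `log AM - log GM` of `n - 1` values with sum `S` and product `C`, together with `a`,
for `m = n`. -/
noncomputable def logAmGmGap (S C m a : ℝ) : ℝ :=
  log ((S + a) / m) - 1 / m * log (C * a)

theorem hasDerivAt_logAmGmGap {S C m a : ℝ} (hSa : S + a ≠ 0) (hC : C ≠ 0) (hm : m ≠ 0)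
    (ha : a ≠ 0) : HasDerivAt (logAmGmGap S C m) (1 / (S + a) - 1 / (m * a)) a := by
  have hAM : HasDerivAt (fun x => log ((S + x) / m)) (1 / m / ((S + a) / m)) a :=
    (((hasDerivAt_id a).const_add S).div_const m).log (div_ne_zero hSa hm)
  have hGM : HasDerivAt (fun x => log (C * x)) (C * 1 / (C * a)) a :=
    ((hasDerivAt_id a).const_mul C).log (mul_ne_zero hC ha)
  exact (hAM.sub (hGM.const_mul (1 / m))).congr_deriv (by field_simp)

theorem continuousOn_logAmGmGap {S C m : ℝ} {s : Set ℝ} (hS : 0 ≤ S) (hC : C ≠ 0)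
    (hm : m ≠ 0) (hs : s ⊆ Ioi 0) : ContinuousOn (logAmGmGap S C m) s := fun _ ha =>
  (hasDerivAt_logAmGmGap (add_pos_of_nonneg_of_pos hS (hs ha)).ne' hC hm
    (hs ha).ne').continuousAt.continuousWithinAt

theorem strictAntiOn_logAmGmGap {S C m : ℝ} (hS : 0 < S) (hC : C ≠ 0) (hm : 1 < m) :
    StrictAntiOn (logAmGmGap S C m) (Ioc 0 (S / (m - 1))) := by
  refine strictAntiOn_of_deriv_neg (convex_Ioc _ _)
    (continuousOn_logAmGmGap hS.le hC (by positivity) fun _ ha => ha.1) fun a ha => ?_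
  rw [interior_Ioc] at ha
  obtain ⟨ha0, haA⟩ := ha
  rw [(hasDerivAt_logAmGmGap (by positivity) hC (by positivity) ha0.ne').deriv, sub_neg]
  have : (m - 1) * a < S := by rwa [lt_div_iff₀ (by linarith), mul_comm] at haA
  exact one_div_lt_one_div_of_lt (by positivity) (by linarith)

theorem strictMonoOn_logAmGmGap {S C m : ℝ} (hS : 0 < S) (hC : C ≠ 0) (hm : 1 < m) :
    StrictMonoOn (logAmGmGap S C m) (Ici (S / (m - 1))) := by
  have hA : 0 < S / (m - 1) := div_pos hS (by linarith)
  refine strictMonoOn_of_deriv_pos (convex_Ici _)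
    (continuousOn_logAmGmGap hS.le hC (by positivity) fun _ ha => hA.trans_le ha) fun a ha => ?_
  rw [interior_Ici] at ha
  have ha0 : 0 < a := hA.trans ha
  rw [(hasDerivAt_logAmGmGap (by positivity) hC (by positivity) ha0.ne').deriv, sub_pos]
  have : S < (m - 1) * a := by rwa [mem_Ioi, div_lt_iff₀ (by linarith), mul_comm] at ha
  exact one_div_lt_one_div_of_lt (by positivity) (by linarith)

theorem le_max_of_antitoneOn_of_monotoneOn {f : ℝ → ℝ} {lo c hi a : ℝ}
    (hanti : AntitoneOn f (Icc lo c)) (hmono : MonotoneOn f (Icc c hi)) (ha : a ∈ Icc lo hi) :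
    f a ≤ max (f lo) (f hi) := by
  rcases le_total a c with hac | hca
  · exact (hanti ⟨le_rfl, ha.1.trans hac⟩ ⟨ha.1, hac⟩ ha.1).trans (le_max_left _ _)
  · exact (hmono ⟨hca, ha.2⟩ ⟨hca.trans ha.2, le_rfl⟩ ha.2).trans (le_max_right _ _)

/-- Dₙ(a) is decreasing on [h̲, min(A,h̄)] and increasing on [max(A,h̲), h̄];
consequently its maximum over [h̲,h̄] is attained at an endpoint. -/
theorem stmt_17 (n : ℕ) (hn : 2 ≤ n) (h : Fin (n - 1) → ℝ)
    (hlo hhi : ℝ) (h0 : 0 < hlo)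
    (hbd : ∀ i, hlo ≤ h i ∧ h i ≤ hhi) :
    let A : ℝ := (∑ i, h i) / ((n : ℝ) - 1)
    let G : ℝ := (∏ i, h i) ^ ((1 : ℝ) / ((n : ℝ) - 1))
    let D : ℝ → ℝ := fun a =>
      Real.log ((((n : ℝ) - 1) * A + a) / n) - (1 / (n : ℝ)) * Real.log (G ^ (n - 1) * a)
    StrictAntiOn D (Set.Icc hlo (min A hhi)) ∧
    StrictMonoOn D (Set.Icc (max A hlo) hhi) ∧
    (∀ a ∈ Set.Icc hlo hhi, D a ≤ max (D hlo) (D hhi)) := by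
  intro A G D
  have hcast : ((n - 1 : ℕ) : ℝ) = n - 1 := by rw [Nat.cast_sub (by omega)]; simp
  have hm : (1 : ℝ) < n := by exact_mod_cast hn
  have hpos : ∀ i, 0 < h i := fun i => h0.trans_le (hbd i).1
  set S := ∑ i, h i
  set C := ∏ i, h i
  have hC : 0 < C := Finset.prod_pos fun i _ => hpos i
  have hloS : (n - 1) * hlo ≤ S := by
    simpa [hcast] using Finset.card_nsmul_le_sum Finset.univ h hlo fun i _ => (hbd i).1
  have hShi : S ≤ (n - 1) * hhi := by
    simpa [hcast] using Finset.sum_le_card_nsmul Finset.univ h hhi fun i _ => (hbd i).2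
  have hS : 0 < S := by nlinarith
  have hloA : hlo ≤ A := by rw [le_div_iff₀ (by linarith)]; linarith
  have hAhi : A ≤ hhi := by rw [div_le_iff₀ (by linarith)]; linarith
  have hG : G ^ (n - 1) = C := by
    rw [← rpow_natCast, ← rpow_mul hC.le, hcast, one_div_mul_cancel (by linarith), rpow_one]
  have hD : D = logAmGmGap S C n := by
    funext a
    simp only [D, A, S, hG, logAmGmGap, mul_div_cancel₀ _ (by linarith : (n : ℝ) - 1 ≠ 0)]
  rw [min_eq_left hAhi, max_eq_left hloA, hD]
  have hanti := (strictAntiOn_logAmGmGap hS hC.ne' hm).mono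
    fun a (ha : a ∈ Icc hlo A) => ⟨h0.trans_le ha.1, ha.2⟩
  have hmono := (strictMonoOn_logAmGmGap hS hC.ne' hm).mono
    fun a (ha : a ∈ Icc A hhi) => ha.1
  exact ⟨hanti, hmono, fun a ha => le_max_of_antitoneOn_of_monotoneOn
    hanti.antitoneOn hmono.monotoneOn ha⟩
end
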